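/- Let n be a positive integer and x_1, …, x_n real numbers. With K_N(θ,φ) := (1/(2π)) ∑_{l=0}^{N−1} cos((l − (N−1)/2)(θ − φ)) and the sine kernel K(x,y) := sin(π(x−y))/(π(x−y)) for x ≠ y, K(x,x) := 1, one has lim_{N→∞} det( (2π/N) · K_N(2πx_j/N, 2πx_k/N) )_{j,k=1}^{n} = det( K(x_j, x_k) )_{j,k=1}^{n}. -/

import Mathlib

/-!
The centred cosine sum telescopes: `sin (t/2) · ∑ₗ cos ((l - (N-1)/2) t) = sin (N t / 2)`, which in
terms of `sinc` reads `sinc (t/2) · K_N = (N / 2π) · sinc (N t / 2)` and holds also at `t = 0`.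
At `t = 2π(a - b)/N` this gives `(2π/N) · K_N = sinc (π(a - b)) / sinc (π(a - b)/N)`, whose
denominator tends to `sinc 0 = 1`. The determinant is continuous in the entries.
-/

open Real MeasureTheory Finset Filter

/-- The circular sine kernel
`K_N(θ,φ) = (1/2π) ∑_{l=0}^{N-1} cos((l-(N-1)/2)(θ-φ))`. -/
noncomputable def circularKernel (N : ℕ) (θ φ : ℝ) : ℝ :=
  (1 / (2 * π)) * ∑ l ∈ Finset.range N, Real.cos (((l : ℝ) - ((N : ℝ) - 1) / 2) * (θ - φ))

/-- The sine kernel `K(x,y) = sin(π(x-y))/(π(x-y))`, with `K(x,x) = 1`. -/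
noncomputable def sineKernel (x y : ℝ) : ℝ :=
  if x = y then 1 else Real.sin (π * (x - y)) / (π * (x - y))

theorem Real.sin_half_mul_sum_cos_centered (N : ℕ) (t : ℝ) :
    sin (t / 2) * ∑ l ∈ range N, cos ((l - ((N : ℝ) - 1) / 2) * t) = sin (N * t / 2) := by
  -- `2 sin(t/2) cos x = sin(x + t/2) - sin(x - t/2)` makes the sum telescope.
  set f : ℕ → ℝ := fun l => sin ((l - (N : ℝ) / 2) * t)
  have step (l : ℕ) : 2 * sin (t / 2) * cos ((l - ((N : ℝ) - 1) / 2) * t) = f (l + 1) - f l := by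
    simp only [f, sin_sub_sin]
    push_cast
    ring_nf
  have hdouble : 2 * (sin (t / 2) * ∑ l ∈ range N, cos ((l - ((N : ℝ) - 1) / 2) * t))
      = 2 * sin (N * t / 2) := by
    rw [← mul_assoc, mul_sum, sum_congr rfl fun l _ => step l, sum_range_sub]
    simp only [f, Nat.cast_zero, zero_sub, neg_mul, sin_neg]
    ring_nf
  linarith

theorem sinc_mul_circularKernel (N : ℕ) (θ φ : ℝ) :
    sinc ((θ - φ) / 2) * circularKernel N θ φ = N / (2 * π) * sinc (N * (θ - φ) / 2) := by
  rcases eq_or_ne N 0 with rfl | hN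
  · simp [circularKernel]
  rcases eq_or_ne (θ - φ) 0 with ht | ht
  · simp [circularKernel, ht]
    field_simp
  have hDirichlet := sin_half_mul_sum_cos_centered N (θ - φ)
  rw [sinc_of_ne_zero (by positivity), sinc_of_ne_zero (by positivity), circularKernel]
  generalize ∑ l ∈ range N, cos ((l - ((N : ℝ) - 1) / 2) * (θ - φ)) = S at hDirichlet ⊢
  rw [← hDirichlet]
  field_simp

theorem sineKernel_eq_sinc (x y : ℝ) : sineKernel x y = sinc (π * (x - y)) := by
  by_cases h : x = y
  · simp [sineKernel, h]
  · rw [sineKernel, if_neg h, sinc_of_ne_zero (mul_ne_zero pi_ne_zero (sub_ne_zero.mpr h))]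

theorem tendsto_sinc_div_natCast (c : ℝ) :
    Tendsto (fun N : ℕ => sinc (c / N)) atTop (nhds 1) := by
  simpa only [sinc_zero, Function.comp_def] using
    (continuous_sinc.tendsto 0).comp (tendsto_const_div_atTop_nhds_zero_nat c)

theorem tendsto_scaled_circularKernel (a b : ℝ) :
    Tendsto (fun N : ℕ => (2 * π / N) * circularKernel N (2 * π * a / N) (2 * π * b / N))
      atTop (nhds (sineKernel a b)) := by
  set c := π * (a - b)
  have hsinc := tendsto_sinc_div_natCast c
  have hquot : Tendsto (fun N : ℕ => sinc c / sinc (c / N)) atTop (nhds (sinc c)) := by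
    simpa only [div_one, Pi.div_def] using tendsto_const_nhds.div hsinc one_ne_zero
  rw [sineKernel_eq_sinc]
  refine hquot.congr' ?_
  filter_upwards [hsinc.eventually_ne one_ne_zero, eventually_ne_atTop 0] with N hsN hN
  have hK := sinc_mul_circularKernel N (2 * π * a / N) (2 * π * b / N)
  rw [show (2 * π * a / N - 2 * π * b / N) / 2 = c / N by ring,
    show N * (2 * π * a / N - 2 * π * b / N) / 2 = c by field_simp; ring] at hK
  rw [div_eq_iff hsN]
  calc sinc c = 2 * π / N * (N / (2 * π) * sinc c) := by field_simp
    _ = _ := by rw [← hK]; ring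

theorem scaling_limit_correlation_det_general (n : ℕ) (x : Fin n → ℝ) :
    Tendsto
      (fun N : ℕ =>
        (Matrix.of fun j k : Fin n =>
          (2 * π / N) * circularKernel N (2 * π * x j / N) (2 * π * x k / N)).det)
      atTop
      (nhds ((Matrix.of fun j k : Fin n => sineKernel (x j) (x k)).det)) := by
  have hentries : Tendsto
      (fun N : ℕ => Matrix.of fun j k : Fin n =>
        (2 * π / N) * circularKernel N (2 * π * x j / N) (2 * π * x k / N))
      atTop (nhds (Matrix.of fun j k : Fin n => sineKernel (x j) (x k))) :=
    tendsto_pi_nhds.2 fun j => tendsto_pi_nhds.2 fun k => tendsto_scaled_circularKernel (x j) (x k)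
  exact (continuous_id.matrix_det.tendsto _).comp hentries

/-- Bulk scaling limit: the scaled circular-kernel correlation determinants converge
to the sine-kernel determinants. -/
theorem scaling_limit_correlation_det (n : ℕ) (hn : 0 < n) (x : Fin n → ℝ) :
    Tendsto
      (fun N : ℕ =>
        (Matrix.of fun j k : Fin n =>
          (2 * π / N) * circularKernel N (2 * π * x j / N) (2 * π * x k / N)).det)
      atTop
      (nhds ((Matrix.of fun j k : Fin n => sineKernel (x j) (x k)).det)) :=
  scaling_limit_correlation_det_general n x
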